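/- Let X ∈ ℝ^{n×p} be a matrix each of whose columns has unit Euclidean norm, and let w ∈ ℝ^p. Then ‖w‖₂ ≤ ‖X·Diag(w)‖_* ≤ ‖w‖₁, i.e. the trace Lasso penalty of w interpolates between the ℓ₂ norm and the ℓ₁ norm of w. -/

import Mathlib

open Matrix

/-- Euclidean norm of a vector. -/
noncomputable def euclNorm {n : Type*} [Fintype n] (x : n → ℝ) : ℝ :=
  Real.sqrt (∑ i, x i ^ 2)

/-- Frobenius norm of a matrix. -/
noncomputable def frob {m n : Type*} [Fintype m] [Fintype n] (A : Matrix m n ℝ) : ℝ :=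
  Real.sqrt (∑ i, ∑ j, A i j ^ 2)

/-- Frobenius inner product ⟨A, B⟩_F = tr(Aᵀ B). -/
noncomputable def frobInner {m n : Type*} [Fintype m] [Fintype n]
    (A B : Matrix m n ℝ) : ℝ :=
  (Aᵀ * B).trace

/-- The ℓ₂ → ℓ₂ operator (spectral) norm of a matrix. -/
noncomputable def opNorm {m n : Type*} [Fintype m] [Fintype n] [DecidableEq n]
    (M : Matrix m n ℝ) : ℝ :=
  ‖LinearMap.toContinuousLinearMap (Matrix.toEuclideanLin M)‖

/-- The nuclear norm, defined by duality with the operator norm: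
‖A‖_* = sup { ⟨M, A⟩_F : ‖M‖_op ≤ 1 }. -/
noncomputable def nuclearNorm {m n : Type*} [Fintype m] [Fintype n] [DecidableEq n]
    (A : Matrix m n ℝ) : ℝ :=
  sSup {c : ℝ | ∃ M : Matrix m n ℝ, opNorm M ≤ 1 ∧ c = frobInner M A}

/-- The operator 𝒜_X : ℝ^{p×r} → ℝ^{n×(pr)}, W ↦ (X·Diag(W_{·1}), …, X·Diag(W_{·r})),
where the column ((i-1)p + j) of the concatenation is indexed by the pair (i, j). -/
noncomputable def traceLassoOp {n p r : ℕ} (X : Matrix (Fin n) (Fin p) ℝ)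
    (W : Matrix (Fin p) (Fin r) ℝ) : Matrix (Fin n) (Fin r × Fin p) ℝ :=
  fun a ij => X a ij.2 * W ij.2 ij.1

/-! A matrix of operator norm at most one has columns of norm at most one, so by Cauchy–Schwarz
column by column its pairing with `A` is at most the sum of the column norms of `A`; for
`A = X · Diag(w)` with unit columns `Xⱼ` these are the `|wⱼ|`. Conversely the Frobenius norm
dominates the operator norm, so `A / ‖A‖_F` is admissible in the supremum and pairs with `A` to
`‖A‖_F`, which for `A = X · Diag(w)` equals `‖w‖₂`. -/

lemma toEuclideanLin_apply_eq_sum {m n : Type*} [Fintype n] [DecidableEq n] (M : Matrix m n ℝ)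
    (x : EuclideanSpace ℝ n) (i : m) : Matrix.toEuclideanLin M x i = ∑ j, M i j * x j := by
  simp [Matrix.mulVec, dotProduct]

section NuclearNorm

variable {m n : Type*} [Fintype m] [Fintype n]

lemma abs_sum_mul_le_euclNorm_mul (x y : n → ℝ) :
    |∑ i, x i * y i| ≤ euclNorm x * euclNorm y := by
  calc |∑ i, x i * y i| = √((∑ i, x i * y i) ^ 2) := (Real.sqrt_sq_eq_abs _).symm
    _ ≤ √((∑ i, x i ^ 2) * ∑ i, y i ^ 2) :=
        Real.sqrt_le_sqrt (Finset.sum_mul_sq_le_sq_mul_sq _ x y)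
    _ = euclNorm x * euclNorm y := Real.sqrt_mul (by positivity) _

lemma euclNorm_smul (c : ℝ) (x : n → ℝ) : euclNorm (c • x) = |c| * euclNorm x := by
  simp only [euclNorm, Pi.smul_apply, smul_eq_mul, mul_pow, ← Finset.mul_sum]
  rw [Real.sqrt_mul (sq_nonneg c), Real.sqrt_sq_eq_abs]

lemma norm_eq_euclNorm (x : EuclideanSpace ℝ n) : ‖x‖ = euclNorm x := by
  simp [EuclideanSpace.norm_eq, euclNorm]

lemma frobInner_eq_sum (M A : Matrix m n ℝ) : frobInner M A = ∑ j, ∑ i, M i j * A i j := by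
  simp [frobInner, Matrix.trace, Matrix.mul_apply]

lemma frobInner_smul_self (c : ℝ) (A : Matrix m n ℝ) : frobInner (c • A) A = c * frob A ^ 2 := by
  rw [frobInner_eq_sum, frob, Real.sq_sqrt (by positivity), Finset.sum_comm, Finset.mul_sum]
  simp only [Finset.mul_sum, Matrix.smul_apply, smul_eq_mul]
  ring_nf

lemma frob_smul (c : ℝ) (A : Matrix m n ℝ) : frob (c • A) = |c| * frob A := by
  simp only [frob, Matrix.smul_apply, smul_eq_mul, mul_pow, ← Finset.mul_sum]
  rw [Real.sqrt_mul (sq_nonneg c), Real.sqrt_sq_eq_abs]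

lemma frob_eq_euclNorm_euclNorm_col (A : Matrix m n ℝ) :
    frob A = euclNorm fun j => euclNorm (Aᵀ j) := by
  simp only [frob, euclNorm, transpose_apply,
    Real.sq_sqrt (Finset.sum_nonneg fun _ _ => sq_nonneg _)]
  rw [Finset.sum_comm]

lemma opNorm_le_frob [DecidableEq n] (M : Matrix m n ℝ) : opNorm M ≤ frob M := by
  refine ContinuousLinearMap.opNorm_le_bound _ (Real.sqrt_nonneg _) fun x => ?_
  have row_bound : ∑ i, (∑ j, M i j * x j) ^ 2 ≤ (∑ i, ∑ j, M i j ^ 2) * ∑ j, x j ^ 2 := by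
    rw [Finset.sum_mul]
    exact Finset.sum_le_sum fun i _ => Finset.sum_mul_sq_le_sq_mul_sq _ _ _
  calc ‖LinearMap.toContinuousLinearMap (Matrix.toEuclideanLin M) x‖
      = √(∑ i, (∑ j, M i j * x j) ^ 2) := by
        simp only [norm_eq_euclNorm, euclNorm, LinearMap.coe_toContinuousLinearMap',
          toEuclideanLin_apply_eq_sum]
    _ ≤ √((∑ i, ∑ j, M i j ^ 2) * ∑ j, x j ^ 2) := Real.sqrt_le_sqrt row_bound
    _ = frob M * ‖x‖ := by rw [Real.sqrt_mul (by positivity), norm_eq_euclNorm, frob, euclNorm]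

lemma euclNorm_col_le_opNorm [DecidableEq n] (M : Matrix m n ℝ) (j : n) :
    euclNorm (Mᵀ j) ≤ opNorm M := by
  have h := (LinearMap.toContinuousLinearMap (Matrix.toEuclideanLin M)).le_opNorm
    (EuclideanSpace.single j 1)
  rw [PiLp.norm_single, norm_one, mul_one, norm_eq_euclNorm] at h
  refine (le_of_eq ?_).trans h
  congr 1
  ext i
  simp [toEuclideanLin_apply_eq_sum]

lemma frobInner_le_sum_euclNorm_col [DecidableEq n] {M : Matrix m n ℝ} (hM : opNorm M ≤ 1)
    (A : Matrix m n ℝ) : frobInner M A ≤ ∑ j, euclNorm (Aᵀ j) := by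
  rw [frobInner_eq_sum]
  refine Finset.sum_le_sum fun j _ => ?_
  calc ∑ i, M i j * A i j ≤ |∑ i, Mᵀ j i * Aᵀ j i| := le_abs_self _
    _ ≤ euclNorm (Mᵀ j) * euclNorm (Aᵀ j) := abs_sum_mul_le_euclNorm_mul _ _
    _ ≤ 1 * euclNorm (Aᵀ j) :=
        mul_le_mul_of_nonneg_right ((euclNorm_col_le_opNorm M j).trans hM) (Real.sqrt_nonneg _)
    _ = euclNorm (Aᵀ j) := one_mul _

lemma nuclearNorm_le_sum_euclNorm_col [DecidableEq n] (A : Matrix m n ℝ) :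
    nuclearNorm A ≤ ∑ j, euclNorm (Aᵀ j) := by
  refine Real.sSup_le ?_ (Finset.sum_nonneg fun j _ => Real.sqrt_nonneg _)
  rintro _ ⟨M, hM, rfl⟩
  exact frobInner_le_sum_euclNorm_col hM A

lemma frob_le_nuclearNorm [DecidableEq n] (A : Matrix m n ℝ) : frob A ≤ nuclearNorm A := by
  have hbdd : BddAbove {c : ℝ | ∃ M : Matrix m n ℝ, opNorm M ≤ 1 ∧ c = frobInner M A} := by
    refine ⟨∑ j, euclNorm (Aᵀ j), ?_⟩
    rintro _ ⟨M, hM, rfl⟩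
    exact frobInner_le_sum_euclNorm_col hM A
  -- No case split: if `frob A = 0` then `(frob A)⁻¹ = 0` and the witness is the zero matrix.
  refine le_csSup hbdd ⟨(frob A)⁻¹ • A, ?_, ?_⟩
  · calc opNorm ((frob A)⁻¹ • A) ≤ frob ((frob A)⁻¹ • A) := opNorm_le_frob _
      _ = (frob A)⁻¹ * frob A := by
        rw [frob_smul, abs_inv, abs_of_nonneg (show 0 ≤ frob A from Real.sqrt_nonneg _)]
      _ ≤ 1 := inv_mul_le_one
  · rw [frobInner_smul_self, sq, ← mul_assoc, inv_mul_mul_self]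

end NuclearNorm

lemma transpose_mul_diagonal_apply {m n : Type*} [Fintype n] [DecidableEq n]
    (X : Matrix m n ℝ) (w : n → ℝ) (j : n) : (X * diagonal w)ᵀ j = w j • Xᵀ j := by
  ext i
  simp [mul_comm]

/-- If each column of X has unit norm, then
‖w‖₂ ≤ ‖X·Diag(w)‖_* ≤ ‖w‖₁. -/
theorem stmt_10 {n p : ℕ} (X : Matrix (Fin n) (Fin p) ℝ) (w : Fin p → ℝ)
    (hX : ∀ j : Fin p, euclNorm (fun a => X a j) = 1) :
    euclNorm w ≤ nuclearNorm (X * Matrix.diagonal w) ∧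
      nuclearNorm (X * Matrix.diagonal w) ≤ ∑ j : Fin p, |w j| := by
  have col_norm (j : Fin p) : euclNorm ((X * diagonal w)ᵀ j) = |w j| := by
    rw [transpose_mul_diagonal_apply, euclNorm_smul, show euclNorm (Xᵀ j) = 1 from hX j, mul_one]
  constructor
  · calc euclNorm w = frob (X * diagonal w) := by
          rw [frob_eq_euclNorm_euclNorm_col, funext col_norm]
          simp only [euclNorm, sq_abs]
      _ ≤ nuclearNorm (X * diagonal w) := frob_le_nuclearNorm _
  · calc nuclearNorm (X * diagonal w) ≤ ∑ j, euclNorm ((X * diagonal w)ᵀ j) :=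
          nuclearNorm_le_sum_euclNorm_col _
      _ = ∑ j, |w j| := by simp only [col_norm]
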